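/- Suppose X : H_A → H_D is a bounded solution of XA − DX + XBX = C and Y : H_D → H_A is a bounded solution of YD − AY + YCY = B. Let Q be the bounded operator on H_A × H_D defined by Q(x, y) = (Yy, Xx), and let Z̃ be the block-diagonal operator Z̃(x, y) = ((A − YC)x, (D − XB)y). Then (I − Q) ∘ L = Z̃ ∘ (I − Q). If moreover 1 does not belong to the spectrum of XY and 1 does not belong to the spectrum of YX, then I − Q is boundedly invertible and L = (I − Q)^{-1} ∘ Z̃ ∘ (I − Q). -/

import Mathlib

/-!
The Riccati equations for `X` and `Y` say precisely that the two components of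
`(1 - Q) L - Z̃ (1 - Q)` vanish. Since `Q` swaps the two factors, `Q² = diag(YX, XY)`, so
`(1 - Q)(1 + Q) = diag(1 - YX, 1 - XY)` is invertible, and as `1 - Q` commutes with `1 + Q`,
`1 - Q` is invertible too.
-/

open ContinuousLinearMap

theorem isUnit_one_sub_of_isUnit_one_sub_mul_self {R : Type*} [Ring R] {a : R}
    (h : IsUnit (1 - a * a)) : IsUnit (1 - a) := by
  have hcomm : Commute (1 - a) (1 + a) :=
    (Commute.one_left _).sub_left ((Commute.one_right a).add_right (Commute.refl a))
  have hfactor : (1 - a) * (1 + a) = 1 - a * a := by noncomm_ring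
  exact (hcomm.isUnit_mul_iff.1 (hfactor ▸ h)).1

theorem isUnit_one_sub_of_one_notMem_spectrum {𝕜 A : Type*} [CommSemiring 𝕜] [Ring A]
    [Algebra 𝕜 A] {a : A} (h : (1 : 𝕜) ∉ spectrum 𝕜 a) : IsUnit (1 - a) := by
  simpa using spectrum.notMem_iff.1 h

theorem ContinuousLinearMap.isUnit_prodMap {R E F : Type*} [Semiring R] [TopologicalSpace E]
    [AddCommMonoid E] [Module R E] [TopologicalSpace F] [AddCommMonoid F] [Module R F]
    {f : E →L[R] E} {g : F →L[R] F} (hf : IsUnit f) (hg : IsUnit g) : IsUnit (f.prodMap g) := by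
  obtain ⟨u, rfl⟩ := hf
  obtain ⟨v, rfl⟩ := hg
  refine ⟨⟨_, (↑u⁻¹ : E →L[R] E).prodMap ↑v⁻¹, ?_, ?_⟩, rfl⟩ <;>
    refine ContinuousLinearMap.ext fun ⟨x, y⟩ => ?_ <;> simp [← mul_apply_eq_comp]

section Riccati

variable {𝕜 E F : Type*} [NontriviallyNormedField 𝕜] [NormedAddCommGroup E] [NormedSpace 𝕜 E]
  [NormedAddCommGroup F] [NormedSpace 𝕜 F]

theorem one_sub_mul_self_eq_prodMap_of_swap {X : E →L[𝕜] F} {Y : F →L[𝕜] E}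
    {Q : E × F →L[𝕜] E × F} (hQ : ∀ x y, Q (x, y) = (Y y, X x)) :
    1 - Q * Q = (1 - Y.comp X).prodMap (1 - X.comp Y) :=
  ContinuousLinearMap.ext fun ⟨x, y⟩ => by simp [hQ]

theorem one_sub_comp_eq_comp_one_sub_of_riccati {A : E →L[𝕜] E} {B : F →L[𝕜] E}
    {C : E →L[𝕜] F} {D : F →L[𝕜] F} {L : E × F →L[𝕜] E × F}
    (hL : ∀ x y, L (x, y) = (A x + B y, C x + D y)) {X : E →L[𝕜] F} {Y : F →L[𝕜] E}
    (hX : X.comp A - D.comp X + (X.comp B).comp X = C)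
    (hY : Y.comp D - A.comp Y + (Y.comp C).comp Y = B)
    {Q Z : E × F →L[𝕜] E × F} (hQ : ∀ x y, Q (x, y) = (Y y, X x))
    (hZ : ∀ x y, Z (x, y) = ((A - Y.comp C) x, (D - X.comp B) y)) :
    (1 - Q).comp L = Z.comp (1 - Q) := by
  refine ContinuousLinearMap.ext fun ⟨x, y⟩ => ?_
  have hXx : X (A x) - D (X x) + X (B (X x)) = C x := by simpa using congr($hX x)
  have hYy : Y (D y) - A (Y y) + Y (C (Y y)) = B y := by simpa using congr($hY y)
  simp only [comp_apply, sub_apply, one_apply_eq_self, hL, hQ, hZ, Prod.mk_sub_mk, map_sub,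
    map_add, Prod.mk.injEq]
  constructor
  · rw [← hYy]; abel
  · rw [← hXx]; abel

end Riccati

theorem block_diagonalization_minus_general {H_A H_D : Type*}
    [NormedAddCommGroup H_A] [InnerProductSpace ℂ H_A]
    [NormedAddCommGroup H_D] [InnerProductSpace ℂ H_D]
    (A : H_A →L[ℂ] H_A) (B : H_D →L[ℂ] H_A) (C : H_A →L[ℂ] H_D) (D : H_D →L[ℂ] H_D)
    (L : (H_A × H_D) →L[ℂ] (H_A × H_D))
    (hL : ∀ (x : H_A) (y : H_D), L (x, y) = (A x + B y, C x + D y))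
    (X : H_A →L[ℂ] H_D) (Y : H_D →L[ℂ] H_A)
    (hX : X.comp A - D.comp X + (X.comp B).comp X = C)
    (hY : Y.comp D - A.comp Y + (Y.comp C).comp Y = B)
    (Q Zt : (H_A × H_D) →L[ℂ] (H_A × H_D))
    (hQ : ∀ (x : H_A) (y : H_D), Q (x, y) = (Y y, X x))
    (hZt : ∀ (x : H_A) (y : H_D), Zt (x, y) = ((A - Y.comp C) x, (D - X.comp B) y)) :
    (1 - Q).comp L = Zt.comp (1 - Q) ∧
      ((1 : ℂ) ∉ spectrum ℂ (X.comp Y) → (1 : ℂ) ∉ spectrum ℂ (Y.comp X) →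
        IsUnit (1 - Q) ∧ L = (Ring.inverse (1 - Q) * Zt) * (1 - Q)) := by
  have hintertwine : (1 - Q) * L = Zt * (1 - Q) :=
    one_sub_comp_eq_comp_one_sub_of_riccati hL hX hY hQ hZt
  refine ⟨hintertwine, fun hXY hYX => ?_⟩
  have hunit : IsUnit (1 - Q) := by
    refine isUnit_one_sub_of_isUnit_one_sub_mul_self ?_
    rw [one_sub_mul_self_eq_prodMap_of_swap hQ]
    exact isUnit_prodMap (isUnit_one_sub_of_one_notMem_spectrum hYX)
      (isUnit_one_sub_of_one_notMem_spectrum hXY)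
  refine ⟨hunit, ?_⟩
  rw [mul_assoc, ← hintertwine, ← mul_assoc, Ring.inverse_mul_cancel _ hunit, one_mul]

/-- If `X` and `Y` solve the pair of Riccati equations associated with the block operator
matrix `L`, and `Q(x,y) = (Yy, Xx)`, `Z̃(x,y) = ((A−YC)x, (D−XB)y)`, then
`(I−Q)L = Z̃(I−Q)`; if moreover `1 ∉ σ(XY)` and `1 ∉ σ(YX)`, then `I−Q` is boundedly
invertible and `L = (I−Q)⁻¹ Z̃ (I−Q)`. -/
theorem block_diagonalization_minus {H_A H_D : Type*}
    [NormedAddCommGroup H_A] [InnerProductSpace ℂ H_A] [CompleteSpace H_A]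
    [NormedAddCommGroup H_D] [InnerProductSpace ℂ H_D] [CompleteSpace H_D]
    (A : H_A →L[ℂ] H_A) (B : H_D →L[ℂ] H_A) (C : H_A →L[ℂ] H_D) (D : H_D →L[ℂ] H_D)
    (L : (H_A × H_D) →L[ℂ] (H_A × H_D))
    (hL : ∀ (x : H_A) (y : H_D), L (x, y) = (A x + B y, C x + D y))
    (X : H_A →L[ℂ] H_D) (Y : H_D →L[ℂ] H_A)
    (hX : X.comp A - D.comp X + (X.comp B).comp X = C)
    (hY : Y.comp D - A.comp Y + (Y.comp C).comp Y = B)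
    (Q Zt : (H_A × H_D) →L[ℂ] (H_A × H_D))
    (hQ : ∀ (x : H_A) (y : H_D), Q (x, y) = (Y y, X x))
    (hZt : ∀ (x : H_A) (y : H_D), Zt (x, y) = ((A - Y.comp C) x, (D - X.comp B) y)) :
    (1 - Q).comp L = Zt.comp (1 - Q) ∧
      ((1 : ℂ) ∉ spectrum ℂ (X.comp Y) → (1 : ℂ) ∉ spectrum ℂ (Y.comp X) →
        IsUnit (1 - Q) ∧ L = (Ring.inverse (1 - Q) * Zt) * (1 - Q)) :=
  block_diagonalization_minus_general A B C D L hL X Y hX hY Q Zt hQ hZt
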